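/- arXiv:2510.08533 — 2 statements merged into one kernel-verified Lean document; each statement's English description precedes it below -/
import Mathlib

section
/- Let ρ be a positive-definite density matrix and A any square complex matrix of the same size, and define K_A[X] = [A,X]·(ρ^{1/2} A† ρ^{−1/2}) − (ρ^{−1/2} A† ρ^{1/2})·[A,X]. Then: (1) K_A is KMS-detailed-balanced, i.e., ⟨K_A[Y], X⟩_ρ = ⟨Y, K_A[X]⟩_ρ for all X, Y; (2) K_A[I] = 0; and (3) every eigenvalue of K_A, viewed as a linear operator on the space of matrices, is real and nonpositive. Consequently, for every t ≥ 0 the exponential map e^{tK_A} is KMS-self-adjoint, fixes the identity, and has all eigenvalues in [0,1]. -/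
open scoped BigOperators
open MeasureTheory
open scoped ComplexOrder

noncomputable section

/-- Configuration space of a chain of `n` sites, each consisting of `q` qubits
(local dimension `2^q`). -/
abbrev SpinIdx (n q : ℕ) : Type := Fin n → Fin q → Fin 2

/-- Matrices (linear operators) on the chain Hilbert space `(ℂ^{2^q})^{⊗ n}`. -/
abbrev Mat (n q : ℕ) : Type := Matrix (SpinIdx n q) (SpinIdx n q) ℂ

/-- Operator norm (largest singular value) of a complex matrix. -/
def opNorm {m : Type*} [Fintype m] [DecidableEq m] (M : Matrix m m ℂ) : ℝ :=
  ‖LinearMap.toContinuousLinearMap (Matrix.toEuclideanLin M)‖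

/-- Matrix exponential. -/
def mexp {m : Type*} [Fintype m] [DecidableEq m] (M : Matrix m m ℂ) : Matrix m m ℂ :=
  NormedSpace.exp M

open Classical in
/-- The positive semidefinite square root of a matrix (junk value `0` if the matrix is
not positive semidefinite). -/
def msqrt {m : Type*} [Fintype m] [DecidableEq m] (ρ : Matrix m m ℂ) : Matrix m m ℂ :=
  if h : ρ.PosSemidef then
    h.1.eigenvectorUnitary.1 * Matrix.diagonal ((↑) ∘ (√·) ∘ h.1.eigenvalues) *
      (star h.1.eigenvectorUnitary : Matrix m m ℂ)
  else 0

/-- KMS inner product `⟨X,Y⟩_ρ = Tr[X† ρ^{1/2} Y ρ^{1/2}]`. -/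
def kmsInner {m : Type*} [Fintype m] [DecidableEq m] (ρ X Y : Matrix m m ℂ) : ℂ :=
  (X.conjTranspose * msqrt ρ * Y * msqrt ρ).trace

/-- Squared KMS norm `‖X‖_ρ²`. -/
def kmsNormSq {m : Type*} [Fintype m] [DecidableEq m] (ρ X : Matrix m m ℂ) : ℝ :=
  (kmsInner ρ X X).re

/-- KMS norm `‖X‖_ρ`. -/
def kmsNorm {m : Type*} [Fintype m] [DecidableEq m] (ρ X : Matrix m m ℂ) : ℝ :=
  Real.sqrt (kmsNormSq ρ X)

/-- Commutator `[A,B] = AB - BA`. -/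
def mComm {m : Type*} [Fintype m] (A B : Matrix m m ℂ) : Matrix m m ℂ :=
  A * B - B * A

/-- The four Pauli matrices `I, X, Y, Z`. -/
def pauli : Fin 4 → Matrix (Fin 2) (Fin 2) ℂ :=
  ![1, !![0, 1; 1, 0], !![0, -Complex.I; Complex.I, 0], !![1, 0; 0, -1]]

/-- The single-site Pauli jump operator at site `i` given by the Pauli word `p`:
it acts as `⊗_{k<q} pauli (p k)` on the `i`-th site and as the identity elsewhere. -/
def pauliOp (n q : ℕ) (i : Fin n) (p : Fin q → Fin 4) : Mat n q :=
  Matrix.of fun a b =>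
    (∏ k : Fin q, pauli (p k) (a i k) (b i k)) *
      (if Function.update a i (b i) = b then 1 else 0)

/-- `X` is supported on the set `S` of sites: it acts as the identity on all tensor
factors outside `S` (i.e. `X = X_S ⊗ I_{S^c}`), stated entrywise. -/
def SupportedOn {n q : ℕ} (S : Set (Fin n)) (X : Mat n q) : Prop :=
  (∀ a b a' b' : SpinIdx n q,
      (∀ i ∈ S, a i = a' i) → (∀ i ∈ S, b i = b' i) →
      (∀ i ∉ S, a i = b i) → (∀ i ∉ S, a' i = b' i) →
      X a b = X a' b') ∧
  ∀ a b : SpinIdx n q, (∃ i ∉ S, a i ≠ b i) → X a b = 0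

/-- `h` is a family of nearest-neighbour terms of a 1D Hamiltonian: each `h b` is Hermitian, has
operator norm at most 1, is supported on the sites `{b, b+1}`, and the (nonexistent) last
link is zero. -/
def IsOneDimTerms (n q : ℕ) (h : Fin n → Mat n q) : Prop :=
  (∀ b, (h b).IsHermitian) ∧
  (∀ b, opNorm (h b) ≤ 1) ∧
  (∀ b : Fin n, SupportedOn {i : Fin n | (i : ℕ) = (b : ℕ) ∨ (i : ℕ) = (b : ℕ) + 1} (h b)) ∧
  ∀ b : Fin n, (b : ℕ) + 1 = n → h b = 0

/-- `H` is a 1D Hamiltonian with nearest-neighbour interactions of strength at most 1. -/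
def IsOneDimHamiltonian (n q : ℕ) (H : Mat n q) : Prop :=
  ∃ h : Fin n → Mat n q, IsOneDimTerms n q h ∧ H = ∑ b, h b

/-- The Gibbs state `e^{-βH}/Tr[e^{-βH}]`. -/
def gibbs {m : Type*} [Fintype m] [DecidableEq m] (β : ℝ) (H : Matrix m m ℂ) : Matrix m m ℂ :=
  ((mexp ((-β : ℂ) • H)).trace)⁻¹ • mexp ((-β : ℂ) • H)

/-- Lattice distance between two subsets of the chain. -/
def chainDist {n : ℕ} (A C : Finset (Fin n)) : ℕ :=
  sInf {d : ℕ | ∃ i ∈ A, ∃ j ∈ C, d = ((i : ℤ) - (j : ℤ)).natAbs}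

/-- A contiguous set of sites. -/
def IsChainInterval {n : ℕ} (A : Finset (Fin n)) : Prop :=
  ∀ i ∈ A, ∀ k ∈ A, ∀ j : Fin n, i ≤ j → j ≤ k → j ∈ A

/-- The interval of sites `[s, t)` of the chain. -/
def chainInterval (n s t : ℕ) : Finset (Fin n) :=
  Finset.univ.filter fun i => s ≤ (i : ℕ) ∧ (i : ℕ) < t

/-- Entrywise (Bochner) integral of a matrix-valued function on `ℝ`. -/
def mIntegral {m : Type*} [Fintype m] (F : ℝ → Matrix m m ℂ) : Matrix m m ℂ :=
  Matrix.of fun i j => ∫ t : ℝ, F t i j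

/-- Heisenberg evolution `e^{iHt} A e^{-iHt}`. -/
def heis {m : Type*} [Fintype m] [DecidableEq m] (H : Matrix m m ℂ) (t : ℝ)
    (A : Matrix m m ℂ) : Matrix m m ℂ :=
  mexp ((Complex.I * (t : ℂ)) • H) * A * mexp ((-(Complex.I * (t : ℂ))) • H)

/-- Gaussian filter function `f_σ(t) = e^{-σ²t²} (σ √(2/π))^{1/2}`. -/
def fGauss (σ t : ℝ) : ℝ :=
  Real.exp (-(σ ^ 2 * t ^ 2)) * Real.sqrt (σ * Real.sqrt (2 / Real.pi))

/-- Operator Fourier transform `Â_σ(ω) = (2π)^{-1/2} ∫ e^{iHt} A e^{-iHt} e^{-iωt} f_σ(t) dt`. -/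
def oft {m : Type*} [Fintype m] [DecidableEq m] (σ : ℝ) (H A : Matrix m m ℂ) (ω : ℝ) :
    Matrix m m ℂ :=
  ((Real.sqrt (2 * Real.pi) : ℂ))⁻¹ •
    mIntegral fun t => ((fGauss σ t : ℂ) * Complex.exp (-(Complex.I * (ω : ℂ) * (t : ℂ)))) • heis H t A

/-- Time-evolved operator Fourier transform `Â_σ(ω,t) = e^{iHt} Â_σ(ω) e^{-iHt}`. -/
def oftT {m : Type*} [Fintype m] [DecidableEq m] (σ : ℝ) (H A : Matrix m m ℂ) (ω t : ℝ) :
    Matrix m m ℂ :=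
  heis H t (oft σ H A ω)

/-- The time weight `g(t) = 1/(β cosh(2πt/β))`. -/
def gWeight (β t : ℝ) : ℝ := (β * Real.cosh (2 * Real.pi * t / β))⁻¹

/-- The Gaussian frequency filter `h_G(ω) = e^{-1/4} e^{-ω²β²/2}`. -/
def hGaussW (β ω : ℝ) : ℝ := Real.exp (-(1 / 4 : ℝ)) * Real.exp (-(ω ^ 2 * β ^ 2) / 2)

/-- The Dirichlet form `⟨O, -L†[O]⟩_ρ` of the exactly detailed-balanced Lindbladian with all
single-site Pauli jumps, Gaussian weight, and energy width `σ = 1/β`. -/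
def dirichletL (n q : ℕ) (β : ℝ) (H ρ O : Mat n q) : ℝ :=
  ∑ i : Fin n, ∑ p : Fin q → Fin 4,
    ∫ ω : ℝ, ∫ t : ℝ,
      gWeight β t * hGaussW β ω *
        kmsNormSq ρ (mComm (oftT (1 / β) H (pauliOp n q i p) ω t) O)

/-- The Dirichlet form `Σ_a ‖[A^a, O]‖_ρ²` of the generator `K` with all single-site
Pauli jumps. -/
def dirichletK (n q : ℕ) (ρ O : Mat n q) : ℝ :=
  ∑ i : Fin n, ∑ p : Fin q → Fin 4, kmsNormSq ρ (mComm (pauliOp n q i p) O)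

/-- `E` is the KMS-orthogonal projection (w.r.t. the state `ρ`) onto the subspace of operators
supported on the complement of `R`: the spectral conditional expectation `Ẽ_R`. -/
def IsKMSProjOnto {n q : ℕ} (ρ : Mat n q) (R : Set (Fin n)) (E : Mat n q → Mat n q) : Prop :=
  (∀ O, SupportedOn Rᶜ (E O)) ∧
  ∀ O Z, SupportedOn Rᶜ Z → kmsInner ρ Z (O - E O) = 0


/-- The auxiliary generator
`K_A[X] = [A,X]·(ρ^{1/2} A† ρ^{-1/2}) - (ρ^{-1/2} A† ρ^{1/2})·[A,X]`. -/
def Ksuper {m : Type*} [Fintype m] [DecidableEq m] (ρ A X : Matrix m m ℂ) : Matrix m m ℂ :=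
  mComm A X * (msqrt ρ * A.conjTranspose * (msqrt ρ)⁻¹)
    - ((msqrt ρ)⁻¹ * A.conjTranspose * msqrt ρ) * mComm A X

/-- The exponential `e^{tK}[X] = Σ_k (t^k/k!) K^k[X]` of a superoperator `K`,
defined entrywise. -/
def superExp {m : Type*} [Fintype m] (K : Matrix m m ℂ → Matrix m m ℂ) (t : ℝ)
    (X : Matrix m m ℂ) : Matrix m m ℂ :=
  Matrix.of fun i j => ∑' k : ℕ, ((t ^ k / (Nat.factorial k) : ℝ) : ℂ) * (K^[k] X) i j

section KProofAux
open Matrix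
variable {m : Type*} [Fintype m] [DecidableEq m]
set_option linter.unusedSectionVars false
set_option maxHeartbeats 1000000

lemma msqrt_eq {ρ : Matrix m m ℂ} (h : ρ.PosSemidef) : msqrt ρ =
    h.1.eigenvectorUnitary.1 * Matrix.diagonal ((↑) ∘ (√·) ∘ h.1.eigenvalues) *
      (star h.1.eigenvectorUnitary : Matrix m m ℂ) := dif_pos h

lemma msqrt_posSemidef {ρ : Matrix m m ℂ} (h : ρ.PosSemidef) : (msqrt ρ).PosSemidef := by
  rw [msqrt_eq h]
  have hd : (Matrix.diagonal (((↑) ∘ (√·) ∘ h.1.eigenvalues) : m → ℂ)).PosSemidef :=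
    Matrix.posSemidef_diagonal_iff.mpr fun i => Complex.zero_le_real.mpr (Real.sqrt_nonneg _)
  have := hd.mul_mul_conjTranspose_same h.1.eigenvectorUnitary.1
  simpa [Matrix.star_eq_conjTranspose] using this

lemma msqrt_herm {ρ : Matrix m m ℂ} (h : ρ.PosSemidef) : (msqrt ρ)ᴴ = msqrt ρ :=
  (msqrt_posSemidef h).1

lemma msqrt_mul_self {ρ : Matrix m m ℂ} (h : ρ.PosSemidef) : msqrt ρ * msqrt ρ = ρ := by
  rw [msqrt_eq h]
  set U := h.1.eigenvectorUnitary with hU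
  have hUU : (star U : Matrix m m ℂ) * U.1 = 1 := Matrix.mem_unitaryGroup_iff'.mp U.2
  have hD : Matrix.diagonal (((↑) ∘ (√·) ∘ h.1.eigenvalues) : m → ℂ) *
      Matrix.diagonal (((↑) ∘ (√·) ∘ h.1.eigenvalues) : m → ℂ) =
      Matrix.diagonal (RCLike.ofReal ∘ h.1.eigenvalues) := by
    rw [Matrix.diagonal_mul_diagonal]
    congr 1; funext i
    simp only [Function.comp_apply]
    rw [← Complex.ofReal_mul, Real.mul_self_sqrt (h.eigenvalues_nonneg i)]; rfl
  calc U.1 * Matrix.diagonal (((↑) ∘ (√·) ∘ h.1.eigenvalues) : m → ℂ) * (star U : Matrix m m ℂ) *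
        (U.1 * Matrix.diagonal (((↑) ∘ (√·) ∘ h.1.eigenvalues) : m → ℂ) * (star U : Matrix m m ℂ))
      = U.1 * (Matrix.diagonal (((↑) ∘ (√·) ∘ h.1.eigenvalues) : m → ℂ) *
        ((star U : Matrix m m ℂ) * U.1) *
        Matrix.diagonal (((↑) ∘ (√·) ∘ h.1.eigenvalues) : m → ℂ)) * (star U : Matrix m m ℂ) := by
        simp only [Matrix.mul_assoc]
    _ = ρ := by
        rw [hUU, Matrix.mul_one, hD]
        conv_rhs => rw [h.1.spectral_theorem]
        rw [Unitary.conjStarAlgAut_apply]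

lemma msqrt_det_isUnit {ρ : Matrix m m ℂ} (hρ : ρ.PosDef) : IsUnit (msqrt ρ).det := by
  have h1 : (msqrt ρ).det * (msqrt ρ).det = ρ.det := by
    rw [← Matrix.det_mul, msqrt_mul_self hρ.posSemidef]
  have h2 : ρ.det ≠ 0 := hρ.det_pos.ne'
  refine isUnit_iff_ne_zero.2 fun h => ?_
  rw [h, mul_zero] at h1; exact h2 h1.symm

lemma msqrt_inv_mul {ρ : Matrix m m ℂ} (hρ : ρ.PosDef) : (msqrt ρ)⁻¹ * msqrt ρ = 1 :=
  Matrix.nonsing_inv_mul _ (msqrt_det_isUnit hρ)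

lemma msqrt_mul_inv {ρ : Matrix m m ℂ} (hρ : ρ.PosDef) : msqrt ρ * (msqrt ρ)⁻¹ = 1 :=
  Matrix.mul_nonsing_inv _ (msqrt_det_isUnit hρ)

lemma trace_conjTranspose_mul_self (M : Matrix m m ℂ) :
    (Mᴴ * M).trace = ((∑ j, ∑ i, Complex.normSq (M i j) : ℝ) : ℂ) := by
  simp only [Matrix.trace, Matrix.diag, Matrix.mul_apply, Matrix.conjTranspose_apply]
  push_cast
  refine Finset.sum_congr rfl fun j _ => Finset.sum_congr rfl fun i _ => ?_
  rw [Complex.normSq_eq_conj_mul_self]; rfl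

set_option linter.unusedSectionVars false

set_option maxHeartbeats 1000000 in
/-- Self inner product is a nonneg real, positive if `X ≠ 0`. -/
lemma kms_self_exists {ρ : Matrix m m ℂ} (hρ : ρ.PosDef) (X : Matrix m m ℂ) :
    ∃ u : ℝ, 0 ≤ u ∧ kmsInner ρ X X = (u : ℂ) ∧ (X ≠ 0 → 0 < u) := by
  have hs : (msqrt ρ).PosSemidef := msqrt_posSemidef hρ.posSemidef
  set r : Matrix m m ℂ := msqrt (msqrt ρ) with hrdef
  have hr2 : r * r = msqrt ρ := msqrt_mul_self hs
  have hrH : rᴴ = r := msqrt_herm hs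
  have hrdet : IsUnit r.det := by
    have h1 : r.det * r.det = (msqrt ρ).det := by rw [← Matrix.det_mul, hr2]
    have h2 : (msqrt ρ).det ≠ 0 := (msqrt_det_isUnit hρ).ne_zero
    exact isUnit_iff_ne_zero.2 fun h => h2 (by rw [← h1, h, mul_zero])
  set M : Matrix m m ℂ := r * X * r with hM
  have hMH : Mᴴ = r * Xᴴ * r := by
    rw [hM, Matrix.conjTranspose_mul, Matrix.conjTranspose_mul, hrH, Matrix.mul_assoc]
  have key : kmsInner ρ X X = (Mᴴ * M).trace := by
    calc kmsInner ρ X X = ((Xᴴ * msqrt ρ * X * r) * r).trace := by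
          rw [kmsInner, ← hr2]; rw [Matrix.mul_assoc (Xᴴ * (r*r) * X) r r]
      _ = (r * (Xᴴ * msqrt ρ * X * r)).trace := (Matrix.trace_mul_comm _ _)
      _ = (Mᴴ * M).trace := by rw [hMH, hM, ← hr2]; noncomm_ring
  refine ⟨∑ j, ∑ i, Complex.normSq (M i j), ?_, ?_, ?_⟩
  · exact Finset.sum_nonneg fun j _ => Finset.sum_nonneg fun i _ => Complex.normSq_nonneg _
  · rw [key, trace_conjTranspose_mul_self]
  · intro hX
    have hMne : M ≠ 0 := by
      intro h
      apply hX
      have : r⁻¹ * M * r⁻¹ = X := by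
        rw [hM, Matrix.mul_assoc, Matrix.mul_assoc, Matrix.mul_nonsing_inv _ hrdet, Matrix.mul_one,
          ← Matrix.mul_assoc, Matrix.nonsing_inv_mul _ hrdet, Matrix.one_mul]
      rw [← this, h, Matrix.mul_zero, Matrix.zero_mul]
    obtain ⟨i0, j0, hij⟩ : ∃ i j, M i j ≠ 0 := by
      by_contra h; push_neg at h; exact hMne (Matrix.ext fun i j => by simp [h])
    clear hMne key hMH hM hrdet hrH hr2
    clear_value M r
    have h1 : 0 < Complex.normSq (M i0 j0) := Complex.normSq_pos.mpr hij
    have h2 : Complex.normSq (M i0 j0) ≤ ∑ i, Complex.normSq (M i j0) :=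
      Finset.single_le_sum (f := fun i => Complex.normSq (M i j0))
        (fun i _ => Complex.normSq_nonneg _) (Finset.mem_univ i0)
    have h3 : (∑ i, Complex.normSq (M i j0)) ≤ ∑ j, ∑ i, Complex.normSq (M i j) :=
      Finset.single_le_sum (f := fun j => ∑ i, Complex.normSq (M i j))
        (fun j _ => Finset.sum_nonneg fun i _ => Complex.normSq_nonneg _) (Finset.mem_univ j0)
    linarith

lemma kms_conj {ρ : Matrix m m ℂ} (hρ : ρ.PosDef) (X Y : Matrix m m ℂ) :
    (starRingEnd ℂ) (kmsInner ρ X Y) = kmsInner ρ Y X := by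
  have hH := msqrt_herm hρ.posSemidef
  calc (starRingEnd ℂ) (kmsInner ρ X Y) = ((Xᴴ * msqrt ρ * Y * msqrt ρ)ᴴ).trace := by
        rw [Matrix.trace_conjTranspose]; rfl
    _ = (msqrt ρ * (Yᴴ * msqrt ρ * X)).trace := by
        simp only [Matrix.conjTranspose_mul, Matrix.conjTranspose_conjTranspose, hH,
          Matrix.mul_assoc]
    _ = kmsInner ρ Y X := by
        rw [Matrix.trace_mul_comm, kmsInner]

lemma kms_add_left (ρ X Y Z : Matrix m m ℂ) :
    kmsInner ρ (X + Y) Z = kmsInner ρ X Z + kmsInner ρ Y Z := by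
  simp [kmsInner, Matrix.conjTranspose_add, Matrix.add_mul, Matrix.trace_add]

lemma kms_smul_left (ρ X Y : Matrix m m ℂ) (c : ℂ) :
    kmsInner ρ (c • X) Y = (starRingEnd ℂ) c * kmsInner ρ X Y := by
  simp [kmsInner, Matrix.conjTranspose_smul, Matrix.smul_mul, Matrix.trace_smul]

lemma kms_key {ρ : Matrix m m ℂ} (hρ : ρ.PosDef) (A X Y : Matrix m m ℂ) :
    kmsInner ρ Y (Ksuper ρ A X) = -kmsInner ρ (mComm A Y) (mComm A X) := by
  set s := msqrt ρ with hsdef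
  set C := mComm A X with hC
  have h1 : s⁻¹ * s = 1 := msqrt_inv_mul hρ
  have h2 : s * s⁻¹ = 1 := msqrt_mul_inv hρ
  have expand : Yᴴ * s * (Ksuper ρ A X) * s
      = Yᴴ * s * C * s * Aᴴ * (s⁻¹ * s) - Yᴴ * (s * s⁻¹) * (Aᴴ * (s * (C * s))) := by
    rw [Ksuper, ← hC, ← hsdef]; noncomm_ring
  rw [h1, h2] at expand
  have lhs : kmsInner ρ Y (Ksuper ρ A X)
      = (Yᴴ * s * C * s * Aᴴ).trace - (Yᴴ * (Aᴴ * (s * (C * s)))).trace := by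
    rw [kmsInner, ← hsdef, expand]
    rw [Matrix.mul_one, Matrix.mul_one, Matrix.trace_sub]
  have rhs : -kmsInner ρ (mComm A Y) (mComm A X)
      = (Aᴴ * (Yᴴ * s * C * s)).trace - ((Yᴴ * Aᴴ) * (s * (C * s))).trace := by
    rw [kmsInner, ← hC, ← hsdef]
    have : (mComm A Y)ᴴ * s * C * s
        = (Yᴴ * Aᴴ) * (s * (C * s)) - Aᴴ * (Yᴴ * s * C * s) := by
      rw [mComm, Matrix.conjTranspose_sub, Matrix.conjTranspose_mul, Matrix.conjTranspose_mul]
      noncomm_ring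
    rw [this, Matrix.trace_sub]; ring
  rw [lhs, rhs, Matrix.trace_mul_comm (Aᴴ) (Yᴴ * s * C * s)]
  congr 1
  rw [Matrix.mul_assoc]

lemma kms_db {ρ : Matrix m m ℂ} (hρ : ρ.PosDef) (A X Y : Matrix m m ℂ) :
    kmsInner ρ (Ksuper ρ A Y) X = kmsInner ρ Y (Ksuper ρ A X) := by
  calc kmsInner ρ (Ksuper ρ A Y) X = (starRingEnd ℂ) (kmsInner ρ X (Ksuper ρ A Y)) :=
        (kms_conj hρ X (Ksuper ρ A Y)).symm
    _ = (starRingEnd ℂ) (-kmsInner ρ (mComm A X) (mComm A Y)) := by rw [kms_key hρ]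
    _ = -kmsInner ρ (mComm A Y) (mComm A X) := by rw [map_neg, kms_conj hρ]
    _ = kmsInner ρ Y (Ksuper ρ A X) := (kms_key hρ A X Y).symm

lemma Ksuper_one (ρ A : Matrix m m ℂ) : Ksuper ρ A (1 : Matrix m m ℂ) = 0 := by
  have : mComm A (1 : Matrix m m ℂ) = 0 := by simp [mComm]
  simp [Ksuper, this]

lemma Ksuper_zero (ρ A : Matrix m m ℂ) : Ksuper ρ A (0 : Matrix m m ℂ) = 0 := by
  have : mComm A (0 : Matrix m m ℂ) = 0 := by simp [mComm]
  simp [Ksuper, this]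

lemma Ksuper_eig_nonpos {ρ : Matrix m m ℂ} (hρ : ρ.PosDef) (A : Matrix m m ℂ)
    (c : ℂ) (X : Matrix m m ℂ) (hX : X ≠ 0) (h : Ksuper ρ A X = c • X) :
    c.im = 0 ∧ c.re ≤ 0 := by
  obtain ⟨u, hu0, hu, hupos⟩ := kms_self_exists hρ X
  obtain ⟨w, hw0, hw, -⟩ := kms_self_exists hρ (mComm A X)
  have key : kmsInner ρ X (Ksuper ρ A X) = -kmsInner ρ (mComm A X) (mComm A X) := kms_key hρ A X X
  rw [h, hw] at key
  have hsc : kmsInner ρ X (c • X) = c * kmsInner ρ X X := by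
    simp [kmsInner, Matrix.mul_smul, Matrix.smul_mul, Matrix.trace_smul]
  rw [hsc, hu] at key
  have hune : (u : ℂ) ≠ 0 := by
    exact_mod_cast (hupos hX).ne'
  have hc : c = ((-w / u : ℝ) : ℂ) := by
    rw [Complex.ofReal_div, Complex.ofReal_neg]
    field_simp
    linear_combination key
  constructor
  · rw [hc]; exact Complex.ofReal_im _
  · rw [hc, Complex.ofReal_re]
    apply div_nonpos_of_nonpos_of_nonneg <;> [linarith; linarith]

lemma superExp_one (ρ A : Matrix m m ℂ) (t : ℝ) :
    superExp (Ksuper ρ A) t (1 : Matrix m m ℂ) = 1 := by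
  have hiter : ∀ k : ℕ, (Ksuper ρ A)^[k] (1 : Matrix m m ℂ)
      = if k = 0 then 1 else 0 := by
    intro k
    cases k with
    | zero => rfl
    | succ j =>
      rw [Function.iterate_succ_apply, Ksuper_one]
      simp only [Nat.succ_ne_zero, if_false]
      exact Function.iterate_fixed (Ksuper_zero ρ A) j
  ext i j
  rw [superExp, Matrix.of_apply]
  rw [tsum_eq_single 0 (by
    intro k hk
    rw [hiter k, if_neg hk]
    simp)]
  rw [hiter 0, if_pos rfl]
  simp

lemma summable_expser (r : ℝ) :
    Summable (fun k : ℕ => ((r ^ k / (Nat.factorial k) : ℝ) : ℂ)) :=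
  Complex.summable_ofReal.mpr (Real.summable_pow_div_factorial r)

lemma tsum_expser (r : ℝ) :
    ∑' k : ℕ, ((r ^ k / (Nat.factorial k) : ℝ) : ℂ) = ((Real.exp r : ℝ) : ℂ) := by
  rw [← Complex.ofReal_tsum]
  congr 1
  rw [Real.exp_eq_exp_ℝ, NormedSpace.exp_eq_tsum_div]

lemma superExp_eigen_sum (K : Matrix m m ℂ →ₗ[ℂ] Matrix m m ℂ) (t : ℝ) {ι : Type*}
    (s : Finset ι) (a : ι → ℂ) (μ : ι → ℝ) (v : ι → Matrix m m ℂ)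
    (hv : ∀ i ∈ s, K (v i) = ((μ i : ℝ) : ℂ) • v i) :
    superExp (⇑K) t (∑ i ∈ s, a i • v i)
      = ∑ i ∈ s, (a i * ((Real.exp (t * μ i) : ℝ) : ℂ)) • v i := by
  have hiter : ∀ k : ℕ, (⇑K)^[k] (∑ i ∈ s, a i • v i)
      = ∑ i ∈ s, (a i * ((μ i : ℂ)) ^ k) • v i := by
    intro k
    induction k with
    | zero => simp
    | succ j ih =>
      rw [Function.iterate_succ_apply', ih, map_sum]
      refine Finset.sum_congr rfl fun i hi => ?_
      rw [_root_.map_smul, hv i hi, smul_smul, pow_succ]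
      ring_nf
  ext p q
  rw [superExp, Matrix.of_apply]
  have hterm : ∀ k : ℕ, ((t ^ k / (Nat.factorial k) : ℝ) : ℂ) * (((⇑K)^[k] (∑ i ∈ s, a i • v i)) p q)
      = ∑ i ∈ s, (((t * μ i) ^ k / (Nat.factorial k) : ℝ) : ℂ) * (a i * v i p q) := by
    intro k
    rw [hiter k, Matrix.sum_apply, Finset.mul_sum]
    refine Finset.sum_congr rfl fun i _ => ?_
    rw [Matrix.smul_apply, smul_eq_mul]
    push_cast
    ring
  rw [tsum_congr hterm, Summable.tsum_finsetSum (fun i _ => (summable_expser (t * μ i)).mul_right _)]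
  rw [Matrix.sum_apply]
  refine Finset.sum_congr rfl fun i _ => ?_
  rw [tsum_mul_right, tsum_expser, Matrix.smul_apply, smul_eq_mul]
  ring

lemma Ksuper_add (ρ A X Y : Matrix m m ℂ) :
    Ksuper ρ A (X + Y) = Ksuper ρ A X + Ksuper ρ A Y := by
  simp only [Ksuper, mComm]; noncomm_ring

lemma Ksuper_smul (ρ A : Matrix m m ℂ) (c : ℂ) (X : Matrix m m ℂ) :
    Ksuper ρ A (c • X) = c • Ksuper ρ A X := by
  have h : mComm A (c • X) = c • mComm A X := by
    simp [mComm, Matrix.mul_smul, Matrix.smul_mul, smul_sub]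
  rw [Ksuper, Ksuper, h, Matrix.smul_mul, Matrix.mul_smul, smul_sub]

noncomputable def kmsCore (ρ : Matrix m m ℂ) (hρ : ρ.PosDef) :
    InnerProductSpace.Core ℂ (Matrix m m ℂ) where
  inner X Y := kmsInner ρ X Y
  conj_inner_symm X Y := kms_conj hρ Y X
  re_inner_nonneg X := by
    obtain ⟨u, h0, hu, -⟩ := kms_self_exists hρ X
    simpa [hu] using h0
  definite X h := by
    by_contra hX
    obtain ⟨u, h0, hu, hp⟩ := kms_self_exists hρ X
    have h' : kmsInner ρ X X = 0 := h
    rw [hu] at h'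
    exact absurd (Complex.ofReal_eq_zero.mp h') (hp hX).ne'
  add_left X Y Z := kms_add_left ρ X Y Z
  smul_left X Y c := kms_smul_left ρ X Y c

end KProofAux

/-- for a positive-definite density matrix `ρ` and any matrix `A`, the
generator `K_A` (1) is KMS-detailed-balanced, (2) annihilates the identity, and (3) has real
nonpositive eigenvalues; consequently, for every `t ≥ 0` the exponential map `e^{tK_A}` is
KMS-self-adjoint, fixes the identity, and has all eigenvalues in `[0,1]`. -/
theorem K_generates_spectral_conditional_expectation {m : Type*} [Fintype m] [DecidableEq m]
    (ρ : Matrix m m ℂ) (hρ : ρ.PosDef) (hρtr : ρ.trace = 1) (A : Matrix m m ℂ) :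
    -- (1) KMS detailed balance
    (∀ X Y : Matrix m m ℂ, kmsInner ρ (Ksuper ρ A Y) X = kmsInner ρ Y (Ksuper ρ A X)) ∧
    -- (2) the identity is fixed
    Ksuper ρ A (1 : Matrix m m ℂ) = 0 ∧
    -- (3) all eigenvalues of `K_A` are real and nonpositive
    (∀ (c : ℂ) (X : Matrix m m ℂ), X ≠ 0 → Ksuper ρ A X = c • X → c.im = 0 ∧ c.re ≤ 0) ∧
    -- consequently, for every `t ≥ 0`:
    ∀ t : ℝ, 0 ≤ t →
      -- `e^{tK_A}` is KMS-self-adjoint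
      (∀ X Y : Matrix m m ℂ,
          kmsInner ρ (superExp (Ksuper ρ A) t X) Y = kmsInner ρ X (superExp (Ksuper ρ A) t Y)) ∧
      -- `e^{tK_A}` fixes the identity
      superExp (Ksuper ρ A) t (1 : Matrix m m ℂ) = 1 ∧
      -- all eigenvalues of `e^{tK_A}` are real and lie in `[0,1]`
      ∀ (c : ℂ) (X : Matrix m m ℂ), X ≠ 0 → superExp (Ksuper ρ A) t X = c • X →
        c.im = 0 ∧ 0 ≤ c.re ∧ c.re ≤ 1 := by
  classical
  refine ⟨fun X Y => kms_db hρ A X Y, Ksuper_one ρ A,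
    fun c X hX h => Ksuper_eig_nonpos hρ A c X hX h, ?_⟩
  intro t ht
  letI : NormedAddCommGroup (Matrix m m ℂ) := (kmsCore ρ hρ).toNormedAddCommGroup
  letI : InnerProductSpace ℂ (Matrix m m ℂ) := InnerProductSpace.ofCore _
  let T : Matrix m m ℂ →ₗ[ℂ] Matrix m m ℂ :=
    { toFun := Ksuper ρ A
      map_add' := Ksuper_add ρ A
      map_smul' := Ksuper_smul ρ A }
  have hsym : T.IsSymmetric := fun X Y => kms_db hρ A Y X
  have hn : Module.finrank ℂ (Matrix m m ℂ) = Module.finrank ℂ (Matrix m m ℂ) := rfl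
  let b := hsym.eigenvectorBasis hn
  let μ := hsym.eigenvalues hn
  have hb : ∀ i, Ksuper ρ A (b i) = ((μ i : ℝ) : ℂ) • b i := fun i =>
    hsym.apply_eigenvectorBasis hn i
  have hμ : ∀ i, μ i ≤ 0 := by
    intro i
    have hne : b i ≠ 0 := b.toBasis.ne_zero i
    have h := Ksuper_eig_nonpos hρ A ((μ i : ℝ) : ℂ) (b i) hne (hb i)
    simpa using h.2
  have hform : ∀ X : Matrix m m ℂ, superExp (Ksuper ρ A) t X
      = ∑ i, (b.repr X i * ((Real.exp (t * μ i) : ℝ) : ℂ)) • b i := by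
    intro X
    conv_lhs => rw [← b.sum_repr X]
    exact superExp_eigen_sum T t Finset.univ (fun i => b.repr X i) μ b (fun i _ => hb i)
  refine ⟨?_, superExp_one ρ A t, ?_⟩
  · -- self-adjointness
    intro X Y
    show (inner ℂ (superExp (Ksuper ρ A) t X) Y : ℂ) = inner ℂ X (superExp (Ksuper ρ A) t Y)
    rw [hform X, hform Y, sum_inner, inner_sum]
    refine Finset.sum_congr rfl fun i _ => ?_
    rw [inner_smul_left, inner_smul_right, ← OrthonormalBasis.repr_apply_apply,
      ← inner_conj_symm X (b i), ← OrthonormalBasis.repr_apply_apply]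
    simp only [_root_.map_mul, Complex.conj_ofReal]
    ring
  · -- eigenvalues of the exponential
    intro c X hX h
    have key : ∀ j, c * b.repr X j = b.repr X j * ((Real.exp (t * μ j) : ℝ) : ℂ) := by
      intro j
      have h1 : (inner ℂ (b j) (superExp (Ksuper ρ A) t X) : ℂ)
          = b.repr X j * ((Real.exp (t * μ j) : ℝ) : ℂ) := by
        rw [hform X, inner_sum]
        have : ∀ i, (inner ℂ (b j) ((b.repr X i * ((Real.exp (t * μ i) : ℝ) : ℂ)) • b i) : ℂ)
            = (b.repr X i * ((Real.exp (t * μ i) : ℝ) : ℂ)) * (if j = i then 1 else 0) := by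
          intro i
          rw [inner_smul_right, orthonormal_iff_ite.mp b.orthonormal j i]
        simp only [this, mul_ite, mul_one, mul_zero]
        simp
      have h2 : (inner ℂ (b j) (superExp (Ksuper ρ A) t X) : ℂ) = c * b.repr X j := by
        rw [h, inner_smul_right, OrthonormalBasis.repr_apply_apply]
      rw [← h2, h1]
    obtain ⟨j, hj⟩ : ∃ j, b.repr X j ≠ 0 := by
      by_contra hall
      push_neg at hall
      apply hX
      rw [← b.sum_repr X]
      simp [hall]
    have hc : c = ((Real.exp (t * μ j) : ℝ) : ℂ) := by
      have hk := key j
      rw [mul_comm (b.repr X j) _] at hk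
      exact mul_right_cancel₀ hj hk
    have hexp1 : Real.exp (t * μ j) ≤ 1 := by
      rw [← Real.exp_zero]
      exact Real.exp_le_exp.mpr (mul_nonpos_iff.mpr (Or.inl ⟨ht, hμ j⟩))
    refine ⟨by rw [hc]; exact Complex.ofReal_im _, by rw [hc, Complex.ofReal_re]; positivity, ?_⟩
    rw [hc, Complex.ofReal_re]
    exact hexp1

end
end

section
/- Let H be a Hermitian square complex matrix, A any square complex matrix of the same size, ω ∈ ℝ, and σ₁, σ₂, σ₃ > 0 with 1/σ₁² = 1/σ₂² + 1/σ₃². Then the operator Fourier transforms satisfy the convolution identity Â_{σ₁}(ω) = √( σ₂σ₃ / (σ₁·√(2π)) ) · ∫_ℝ e^{iHt} Â_{σ₃}(ω) e^{−iHt} · e^{−iωt} · f_{σ₂}(t) dt. -/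
open scoped BigOperators
open MeasureTheory
open scoped ComplexOrder

noncomputable section

section AuxOFT

open Complex MeasureTheory

/-- Value of the Gaussian Fourier integral `∫ f_σ(t) e^{iνt} dt`. -/
noncomputable def Vval (σ ν : ℝ) : ℝ :=
  Real.sqrt (σ * Real.sqrt (2 / Real.pi)) * (Real.sqrt Real.pi / σ) *
    Real.exp (-(ν ^ 2 / (4 * σ ^ 2)))

lemma fg_cexp (σ t : ℝ) (w : ℂ) :
    (fGauss σ t : ℂ) * Complex.exp w =
      ((Real.sqrt (σ * Real.sqrt (2 / Real.pi)) : ℝ) : ℂ) *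
        Complex.exp (-(σ : ℂ) ^ 2 * (t : ℂ) ^ 2 + w) := by
  unfold fGauss
  rw [Complex.ofReal_mul, Complex.ofReal_exp, Complex.exp_add]
  have h : ((-(σ ^ 2 * t ^ 2) : ℝ) : ℂ) = -(σ : ℂ) ^ 2 * (t : ℂ) ^ 2 := by push_cast; ring
  rw [h]; ring

lemma neg_sq_re_neg {σ : ℝ} (hσ : 0 < σ) : (-(σ : ℂ) ^ 2).re < 0 := by
  have h : (-(σ : ℂ) ^ 2) = ((-(σ ^ 2) : ℝ) : ℂ) := by push_cast; ring
  rw [h, Complex.ofReal_re]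
  nlinarith

lemma gauss_fourier {σ : ℝ} (hσ : 0 < σ) (ν : ℝ) :
    ∫ t : ℝ, (fGauss σ t : ℂ) * Complex.exp (Complex.I * (ν : ℂ) * (t : ℂ)) =
      ((Vval σ ν : ℝ) : ℂ) := by
  have hb := neg_sq_re_neg hσ
  have h1 : ∀ t : ℝ, (fGauss σ t : ℂ) * Complex.exp (Complex.I * (ν : ℂ) * (t : ℂ)) =
      ((Real.sqrt (σ * Real.sqrt (2 / Real.pi)) : ℝ) : ℂ) *
        Complex.exp (-(σ : ℂ) ^ 2 * (t : ℂ) ^ 2 + (Complex.I * (ν : ℂ)) * (t : ℂ) + 0) := by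
    intro t
    rw [fg_cexp]
    congr 2
    ring
  simp_rw [h1]
  rw [MeasureTheory.integral_const_mul, integral_cexp_quadratic hb]
  have hσ0 : (σ : ℂ) ≠ 0 := Complex.ofReal_ne_zero.mpr hσ.ne'
  have hcpow : (↑Real.pi / -(-(σ : ℂ) ^ 2)) ^ (1 / 2 : ℂ) =
      ((Real.sqrt Real.pi / σ : ℝ) : ℂ) := by
    have hπσ : (↑Real.pi / -(-(σ : ℂ) ^ 2)) = (((Real.pi / σ ^ 2 : ℝ)) : ℂ) := by
      push_cast; ring
    rw [hπσ, show (1 / 2 : ℂ) = ((1 / 2 : ℝ) : ℂ) by norm_num,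
      ← Complex.ofReal_cpow (by positivity)]
    rw [← Real.sqrt_eq_rpow, Real.sqrt_div Real.pi_pos.le, Real.sqrt_sq hσ.le]
  have harg : (0 : ℂ) - (Complex.I * (ν : ℂ)) ^ 2 / (4 * -(σ : ℂ) ^ 2) =
      ((-(ν ^ 2 / (4 * σ ^ 2)) : ℝ) : ℂ) := by
    rw [mul_pow, Complex.I_sq]
    push_cast
    field_simp
    ring
  rw [hcpow, harg, ← Complex.ofReal_exp]
  unfold Vval
  push_cast
  ring

lemma gauss_phase (ω μ t : ℝ) :
    Complex.exp (-(Complex.I * (ω : ℂ) * (t : ℂ))) *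
        Complex.exp (Complex.I * (t : ℂ) * ((μ : ℝ) : ℂ)) =
      Complex.exp (Complex.I * ((μ - ω : ℝ) : ℂ) * (t : ℂ)) := by
  rw [← Complex.exp_add]
  congr 1
  push_cast
  ring

lemma gauss_pointwise (σ ω μ t : ℝ) (z : ℂ) :
    ((fGauss σ t : ℂ) * Complex.exp (-(Complex.I * (ω : ℂ) * (t : ℂ)))) *
        (z * Complex.exp (Complex.I * (t : ℂ) * ((μ : ℝ) : ℂ)))
      = z * ((fGauss σ t : ℂ) * Complex.exp (Complex.I * ((μ - ω : ℝ) : ℂ) * (t : ℂ))) := by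
  calc ((fGauss σ t : ℂ) * Complex.exp (-(Complex.I * (ω : ℂ) * (t : ℂ)))) *
        (z * Complex.exp (Complex.I * (t : ℂ) * ((μ : ℝ) : ℂ)))
      = z * ((fGauss σ t : ℂ) * (Complex.exp (-(Complex.I * (ω : ℂ) * (t : ℂ))) *
          Complex.exp (Complex.I * (t : ℂ) * ((μ : ℝ) : ℂ)))) := by ring
    _ = _ := by rw [gauss_phase]

lemma gauss_integrable {σ : ℝ} (hσ : 0 < σ) (ν : ℝ) :
    MeasureTheory.Integrable
      (fun t : ℝ => (fGauss σ t : ℂ) * Complex.exp (Complex.I * ((ν : ℝ) : ℂ) * (t : ℂ))) := by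
  have hb := neg_sq_re_neg hσ
  have h1 : ∀ t : ℝ, (fGauss σ t : ℂ) * Complex.exp (Complex.I * (ν : ℂ) * (t : ℂ)) =
      ((Real.sqrt (σ * Real.sqrt (2 / Real.pi)) : ℝ) : ℂ) *
        Complex.exp (-(σ : ℂ) ^ 2 * (t : ℂ) ^ 2 + (Complex.I * (ν : ℂ)) * (t : ℂ) + 0) := by
    intro t
    rw [fg_cexp]
    congr 2
    ring
  simp_rw [h1]
  exact (integrable_cexp_quadratic' hb _ _).const_mul _

lemma gauss_int {σ : ℝ} (hσ : 0 < σ) (ω μ : ℝ) (z : ℂ) :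
    ∫ t : ℝ, ((fGauss σ t : ℂ) * Complex.exp (-(Complex.I * (ω : ℂ) * (t : ℂ)))) *
        (z * Complex.exp (Complex.I * (t : ℂ) * ((μ : ℝ) : ℂ)))
      = z * ((Vval σ (μ - ω) : ℝ) : ℂ) := by
  simp_rw [gauss_pointwise]
  rw [MeasureTheory.integral_const_mul, gauss_fourier hσ]

lemma gauss_int_integrable {σ : ℝ} (hσ : 0 < σ) (ω μ : ℝ) (z : ℂ) :
    MeasureTheory.Integrable
      (fun t : ℝ => ((fGauss σ t : ℂ) * Complex.exp (-(Complex.I * (ω : ℂ) * (t : ℂ)))) *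
        (z * Complex.exp (Complex.I * (t : ℂ) * ((μ : ℝ) : ℂ)))) := by
  simp_rw [gauss_pointwise]
  exact (gauss_integrable hσ (μ - ω)).const_mul z

lemma Vval_conv {σ₁ σ₂ σ₃ : ℝ} (h₁ : 0 < σ₁) (h₂ : 0 < σ₂) (h₃ : 0 < σ₃)
    (hσ : 1 / σ₁ ^ 2 = 1 / σ₂ ^ 2 + 1 / σ₃ ^ 2) (ν : ℝ) :
    Vval σ₁ ν =
      Real.sqrt (σ₂ * σ₃ / (σ₁ * Real.sqrt (2 * Real.pi))) * Vval σ₂ ν * Vval σ₃ ν := by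
  have hπ := Real.pi_pos
  set q := Real.sqrt (2 / Real.pi) with hqdef
  set p := Real.sqrt (2 * Real.pi) with hpdef
  set r := Real.sqrt Real.pi with hrdef
  have hq0 : 0 ≤ q := Real.sqrt_nonneg _
  have hp0 : 0 < p := Real.sqrt_pos.mpr (by positivity)
  have hr0 : 0 ≤ r := Real.sqrt_nonneg _
  have hq2 : q ^ 2 = 2 / Real.pi := Real.sq_sqrt (by positivity)
  have hp2 : p ^ 2 = 2 * Real.pi := Real.sq_sqrt (by positivity)
  have hr2 : r ^ 2 = Real.pi := Real.sq_sqrt (by positivity)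
  have hpq : p * q = 2 := by
    rw [hpdef, hqdef, ← Real.sqrt_mul (by positivity)]
    rw [show (2 * Real.pi) * (2 / Real.pi) = 2 ^ 2 by field_simp]
    exact Real.sqrt_sq (by norm_num)
  set u₁ := Real.sqrt (σ₁ * q) with hu₁def
  set u₂ := Real.sqrt (σ₂ * q) with hu₂def
  set u₃ := Real.sqrt (σ₃ * q) with hu₃def
  set w := Real.sqrt (σ₂ * σ₃ / (σ₁ * p)) with hwdef
  have hu₁0 : 0 ≤ u₁ := Real.sqrt_nonneg _
  have hu₂0 : 0 ≤ u₂ := Real.sqrt_nonneg _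
  have hu₃0 : 0 ≤ u₃ := Real.sqrt_nonneg _
  have hw0 : 0 ≤ w := Real.sqrt_nonneg _
  have hu₁2 : u₁ ^ 2 = σ₁ * q := Real.sq_sqrt (by positivity)
  have hu₂2 : u₂ ^ 2 = σ₂ * q := Real.sq_sqrt (by positivity)
  have hu₃2 : u₃ ^ 2 = σ₃ * q := Real.sq_sqrt (by positivity)
  have hw2 : w ^ 2 = σ₂ * σ₃ / (σ₁ * p) := Real.sq_sqrt (by positivity)
  have hE : Real.exp (-(ν ^ 2 / (4 * σ₂ ^ 2))) * Real.exp (-(ν ^ 2 / (4 * σ₃ ^ 2))) =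
      Real.exp (-(ν ^ 2 / (4 * σ₁ ^ 2))) := by
    rw [← Real.exp_add]
    congr 1
    have e : ∀ s : ℝ, ν ^ 2 / (4 * s ^ 2) = ν ^ 2 / 4 * (1 / s ^ 2) := by
      intro s
      rw [mul_one_div, div_div]
    rw [e σ₁, e σ₂, e σ₃, hσ]
    ring
  have hC : u₁ * (r / σ₁) = w * (u₂ * (r / σ₂)) * (u₃ * (r / σ₃)) := by
    have ha : 0 ≤ u₁ * (r / σ₁) := by positivity
    have hb : 0 ≤ w * (u₂ * (r / σ₂)) * (u₃ * (r / σ₃)) := by positivity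
    have hsq : (u₁ * (r / σ₁)) ^ 2 = (w * (u₂ * (r / σ₂)) * (u₃ * (r / σ₃))) ^ 2 := by
      have expand1 : (u₁ * (r / σ₁)) ^ 2 = u₁ ^ 2 * r ^ 2 / σ₁ ^ 2 := by ring
      have expand2 : (w * (u₂ * (r / σ₂)) * (u₃ * (r / σ₃))) ^ 2 =
          w ^ 2 * u₂ ^ 2 * u₃ ^ 2 * r ^ 2 * r ^ 2 / (σ₂ ^ 2 * σ₃ ^ 2) := by ring
      rw [expand1, expand2, hu₁2, hu₂2, hu₃2, hw2, hr2]
      have key1 : q * Real.pi = p := by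
        have h' : q * Real.pi * p = p * p := by
          rw [show q * Real.pi * p = p * q * Real.pi by ring, hpq,
            show p * p = p ^ 2 by ring, hp2]
          try ring
        exact mul_right_cancel₀ hp0.ne' h'
      have hrhs : σ₂ * σ₃ / (σ₁ * p) * (σ₂ * q) * (σ₃ * q) * Real.pi * Real.pi /
          (σ₂ ^ 2 * σ₃ ^ 2) = q * Real.pi * (q * Real.pi) / (σ₁ * p) := by
        field_simp
        try ring
      have hlhs : σ₁ * q * Real.pi / σ₁ ^ 2 = q * Real.pi / σ₁ := by
        field_simp
        try ring
      rw [hlhs, hrhs, key1]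
      rw [show p * p / (σ₁ * p) = p / σ₁ * (p / p) by ring, div_self hp0.ne', mul_one]
    calc u₁ * (r / σ₁) = Real.sqrt ((u₁ * (r / σ₁)) ^ 2) := (Real.sqrt_sq ha).symm
      _ = Real.sqrt ((w * (u₂ * (r / σ₂)) * (u₃ * (r / σ₃))) ^ 2) := by rw [hsq]
      _ = w * (u₂ * (r / σ₂)) * (u₃ * (r / σ₃)) := Real.sqrt_sq hb
  unfold Vval
  rw [← hu₁def, ← hu₂def, ← hu₃def, ← hrdef, ← hE]
  linear_combination
    (Real.exp (-(ν ^ 2 / (4 * σ₂ ^ 2))) * Real.exp (-(ν ^ 2 / (4 * σ₃ ^ 2)))) * hC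

end AuxOFT

/-- Gaussian convolution of operator Fourier transforms: for a Hermitian
`H`, any matrix `A`, `ω ∈ ℝ`, and widths `σ₁, σ₂, σ₃ > 0` with `1/σ₁² = 1/σ₂² + 1/σ₃²`:
`Â_{σ₁}(ω) = √(σ₂σ₃/(σ₁√(2π))) ∫ e^{iHt} Â_{σ₃}(ω) e^{-iHt} e^{-iωt} f_{σ₂}(t) dt`. -/
theorem oft_gaussian_convolution {m : Type*} [Fintype m] [DecidableEq m]
    (H A : Matrix m m ℂ) (hH : H.IsHermitian) (ω : ℝ) (σ₁ σ₂ σ₃ : ℝ)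
    (h₁ : 0 < σ₁) (h₂ : 0 < σ₂) (h₃ : 0 < σ₃)
    (hσ : 1 / σ₁ ^ 2 = 1 / σ₂ ^ 2 + 1 / σ₃ ^ 2) :
    oft σ₁ H A ω =
      ((Real.sqrt (σ₂ * σ₃ / (σ₁ * Real.sqrt (2 * Real.pi))) : ℝ) : ℂ) •
        mIntegral (fun t =>
          ((fGauss σ₂ t : ℂ) * Complex.exp (-(Complex.I * (ω : ℂ) * (t : ℂ)))) •
            heis H t (oft σ₃ H A ω)) := by
  classical
  have hUmem := hH.eigenvectorUnitary.2
  set U : Matrix m m ℂ := (hH.eigenvectorUnitary : Matrix m m ℂ) with hUdef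
  set d : m → ℝ := hH.eigenvalues with hddef
  have hU1 : U * star U = 1 := Matrix.mem_unitaryGroup_iff.mp hUmem
  have hU2 : star U * U = 1 := Matrix.mem_unitaryGroup_iff'.mp hUmem
  have hUinv : U⁻¹ = star U := Matrix.inv_eq_right_inv hU1
  have hUisunit : IsUnit U := ⟨⟨U, star U, hU1, hU2⟩, rfl⟩
  -- matrix exponential in diagonalized form
  have hmexp : ∀ c : ℂ, mexp (c • H) =
      U * Matrix.diagonal (fun k => Complex.exp (c * ((d k : ℝ) : ℂ))) * star U := by
    intro c
    have h0 : c • H = U * Matrix.diagonal (fun k => c * ((d k : ℝ) : ℂ)) * star U := by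
      conv_lhs => rw [hH.spectral_theorem]
      simp only [Unitary.conjStarAlgAut_apply, Unitary.coe_star]
      rw [← Matrix.smul_mul, ← Matrix.mul_smul, ← Matrix.diagonal_smul]
      congr 2
    rw [h0, ← hUinv]
    unfold mexp
    rw [Matrix.exp_conj U _ hUisunit, Matrix.exp_diagonal, Pi.exp_def]
    simp only [Complex.exp_eq_exp_ℂ]
  -- Heisenberg evolution in diagonalized form
  have hheis : ∀ (t : ℝ) (M : Matrix m m ℂ),
      heis H t (U * M * star U) =
        U * (Matrix.of fun k l =>
          Complex.exp (Complex.I * (t : ℂ) * ((d k - d l : ℝ) : ℂ)) * M k l) * star U := by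
    intro t M
    unfold heis
    rw [hmexp, hmexp]
    have cancel : ∀ X : Matrix m m ℂ, X * star U * U = X := fun X => by
      rw [mul_assoc, hU2, mul_one]
    have collapse :
        U * Matrix.diagonal (fun k => Complex.exp (Complex.I * (t : ℂ) * ((d k : ℝ) : ℂ))) *
          star U * (U * M * star U) *
          (U * Matrix.diagonal (fun k => Complex.exp (-(Complex.I * (t : ℂ)) * ((d k : ℝ) : ℂ))) *
            star U) =
        U * (Matrix.diagonal (fun k => Complex.exp (Complex.I * (t : ℂ) * ((d k : ℝ) : ℂ))) * M *
          Matrix.diagonal (fun k => Complex.exp (-(Complex.I * (t : ℂ)) * ((d k : ℝ) : ℂ)))) *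
          star U := by
      simp only [← mul_assoc]
      rw [cancel, cancel]
    rw [collapse]
    have hmid : Matrix.diagonal (fun k => Complex.exp (Complex.I * (t : ℂ) * ((d k : ℝ) : ℂ))) * M *
          Matrix.diagonal (fun k => Complex.exp (-(Complex.I * (t : ℂ)) * ((d k : ℝ) : ℂ))) =
        Matrix.of fun k l =>
          Complex.exp (Complex.I * (t : ℂ) * ((d k - d l : ℝ) : ℂ)) * M k l := by
      ext k l
      simp only [Matrix.diagonal_mul, Matrix.mul_diagonal, Matrix.of_apply]
      calc Complex.exp (Complex.I * (t : ℂ) * ((d k : ℝ) : ℂ)) * M k l *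
            Complex.exp (-(Complex.I * (t : ℂ)) * ((d l : ℝ) : ℂ))
          = Complex.exp (Complex.I * (t : ℂ) * ((d k : ℝ) : ℂ)) *
              Complex.exp (-(Complex.I * (t : ℂ)) * ((d l : ℝ) : ℂ)) * M k l := by ring
        _ = Complex.exp (Complex.I * (t : ℂ) * ((d k - d l : ℝ) : ℂ)) * M k l := by
            rw [← Complex.exp_add]
            congr 2
            push_cast
            ring
    rw [hmid]
  -- entrywise expansion of a conjugated matrix
  have e1 : ∀ (N : Matrix m m ℂ) (i j : m),
      (U * N * star U) i j = ∑ x : m, ∑ k : m, U i k * N k x * star U x j := by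
    intro N i j
    rw [Matrix.mul_apply]
    simp_rw [Matrix.mul_apply, Finset.sum_mul]
  -- the core integral computation
  have hcore : ∀ (σ : ℝ), 0 < σ → ∀ (M : Matrix m m ℂ),
      mIntegral (fun t => ((fGauss σ t : ℂ) * Complex.exp (-(Complex.I * (ω : ℂ) * (t : ℂ)))) •
          (U * (Matrix.of fun k l =>
            Complex.exp (Complex.I * (t : ℂ) * ((d k - d l : ℝ) : ℂ)) * M k l) * star U))
        = U * (Matrix.of fun k l => ((Vval σ (d k - d l - ω) : ℝ) : ℂ) * M k l) * star U := by
    intro σ hσ M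
    ext i j
    show (∫ t : ℝ, (((fGauss σ t : ℂ) * Complex.exp (-(Complex.I * (ω : ℂ) * (t : ℂ)))) •
          (U * (Matrix.of fun k l =>
            Complex.exp (Complex.I * (t : ℂ) * ((d k - d l : ℝ) : ℂ)) * M k l) * star U)) i j) = _
    have hpt : ∀ t : ℝ, (((fGauss σ t : ℂ) * Complex.exp (-(Complex.I * (ω : ℂ) * (t : ℂ)))) •
          (U * (Matrix.of fun k l =>
            Complex.exp (Complex.I * (t : ℂ) * ((d k - d l : ℝ) : ℂ)) * M k l) * star U)) i j
        = ∑ x : m, ∑ k : m,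
            ((fGauss σ t : ℂ) * Complex.exp (-(Complex.I * (ω : ℂ) * (t : ℂ)))) *
              ((U i k * M k x * star U x j) *
                Complex.exp (Complex.I * (t : ℂ) * ((d k - d x : ℝ) : ℂ))) := by
      intro t
      rw [Matrix.smul_apply, smul_eq_mul, e1, Finset.mul_sum]
      refine Finset.sum_congr rfl fun x _ => ?_
      rw [Finset.mul_sum]
      refine Finset.sum_congr rfl fun k _ => ?_
      simp only [Matrix.of_apply]
      ring
    simp_rw [hpt]
    rw [MeasureTheory.integral_finset_sum _ (fun x _ =>
      MeasureTheory.integrable_finset_sum _ (fun k _ =>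
        gauss_int_integrable hσ ω (d k - d x) (U i k * M k x * star U x j)))]
    have : ∀ x ∈ (Finset.univ : Finset m),
        (∫ t : ℝ, ∑ k : m,
            ((fGauss σ t : ℂ) * Complex.exp (-(Complex.I * (ω : ℂ) * (t : ℂ)))) *
              ((U i k * M k x * star U x j) *
                Complex.exp (Complex.I * (t : ℂ) * ((d k - d x : ℝ) : ℂ))))
          = ∑ k : m, (U i k * M k x * star U x j) * ((Vval σ (d k - d x - ω) : ℝ) : ℂ) := by
      intro x _
      rw [MeasureTheory.integral_finset_sum _ (fun k _ =>
        gauss_int_integrable hσ ω (d k - d x) (U i k * M k x * star U x j))]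
      exact Finset.sum_congr rfl fun k _ => gauss_int hσ ω (d k - d x) _
    rw [Finset.sum_congr rfl this, e1]
    refine Finset.sum_congr rfl fun x _ => Finset.sum_congr rfl fun k _ => ?_
    simp only [Matrix.of_apply]
    ring
  -- A in diagonalized frame
  set B : Matrix m m ℂ := star U * A * U with hBdef
  have hA' : A = U * B * star U := by
    rw [hBdef]
    simp only [← mul_assoc]
    rw [hU1, one_mul, mul_assoc, hU1, mul_one]
  -- closed form of oft
  have hoft : ∀ σ : ℝ, 0 < σ → oft σ H A ω =
      ((Real.sqrt (2 * Real.pi) : ℝ) : ℂ)⁻¹ •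
        (U * (Matrix.of fun k l => ((Vval σ (d k - d l - ω) : ℝ) : ℂ) * B k l) * star U) := by
    intro σ hσ
    unfold oft
    congr 1
    have hint : (fun t : ℝ =>
        ((fGauss σ t : ℂ) * Complex.exp (-(Complex.I * (ω : ℂ) * (t : ℂ)))) • heis H t A) =
        fun t : ℝ => ((fGauss σ t : ℂ) * Complex.exp (-(Complex.I * (ω : ℂ) * (t : ℂ)))) •
          (U * (Matrix.of fun k l =>
            Complex.exp (Complex.I * (t : ℂ) * ((d k - d l : ℝ) : ℂ)) * B k l) * star U) := by
      funext t
      congr 1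
      conv_lhs => rw [hA']
      exact hheis t B
    rw [hint, hcore σ hσ B]
  -- rewrite the integrand of the right-hand side
  set s : ℂ := ((Real.sqrt (2 * Real.pi) : ℝ) : ℂ)⁻¹ with hsdef
  set M₀ : Matrix m m ℂ :=
    Matrix.of fun k l => ((Vval σ₃ (d k - d l - ω) : ℝ) : ℂ) * B k l with hM₀def
  have h3 : oft σ₃ H A ω = U * (s • M₀) * star U := by
    rw [hoft σ₃ h₃]
    conv_lhs => rw [← Matrix.smul_mul, ← Matrix.mul_smul]
  have h4 : (fun t : ℝ =>
      ((fGauss σ₂ t : ℂ) * Complex.exp (-(Complex.I * (ω : ℂ) * (t : ℂ)))) •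
        heis H t (oft σ₃ H A ω)) =
      fun t : ℝ => ((fGauss σ₂ t : ℂ) * Complex.exp (-(Complex.I * (ω : ℂ) * (t : ℂ)))) •
        (U * (Matrix.of fun k l =>
          Complex.exp (Complex.I * (t : ℂ) * ((d k - d l : ℝ) : ℂ)) * (s • M₀) k l) * star U) := by
    funext t
    congr 1
    rw [h3]
    exact hheis t (s • M₀)
  rw [h4, hcore σ₂ h₂ (s • M₀), hoft σ₁ h₁]
  conv_lhs => rw [← Matrix.smul_mul, ← Matrix.mul_smul]
  conv_rhs => rw [← Matrix.smul_mul, ← Matrix.mul_smul]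
  have hmid2 : s • (Matrix.of fun k l => ((Vval σ₁ (d k - d l - ω) : ℝ) : ℂ) * B k l) =
      ((Real.sqrt (σ₂ * σ₃ / (σ₁ * Real.sqrt (2 * Real.pi))) : ℝ) : ℂ) •
        (Matrix.of fun k l =>
          ((Vval σ₂ (d k - d l - ω) : ℝ) : ℂ) * (s • M₀) k l) := by
    ext k l
    simp only [Matrix.smul_apply, Matrix.of_apply, hM₀def, smul_eq_mul, hsdef]
    rw [Vval_conv h₁ h₂ h₃ hσ (d k - d l - ω)]
    push_cast
    ring
  rw [hmid2]

end
end
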